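/- Let k + 2 = p'/p with p, p' coprime integers ≥ 2, let ℓ, r, s be integers with 1 ≤ s ≤ p'-1, 1 ≤ r ≤ p-2, and λ ∈ ℂ. Then h_{p,p'}^{r+1,s} + (1/4)((ℓ+1)²k + 4(ℓ+2)(λ - k/2)) − (h_{p,p'}^{r,s} + (1/4)(ℓ²k + 4(ℓ+1)λ)) is an integer if and only if λ − λ_{r,s}^+ is an integer, where λ_{r,s}^+ = ((s-1) − (k+2)(r-1))/2. -/

import Mathlib

/-!
With `p' = (k + 2) p`, the difference of the two conformal weights collapses to `λ - λ⁺ + 1`: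
the Virasoro parts contribute `((2r + 1)(k + 2) - 2s)/4` and the `ℓ`-dependence of the
remaining parts cancels, leaving `λ - 3k/4`.
-/

theorem exists_intCast_eq_add_one_iff {R : Type*} [AddGroupWithOne R] (x : R) :
    (∃ n : ℤ, x + 1 = n) ↔ ∃ n : ℤ, x = n :=
  ⟨fun ⟨n, h⟩ => ⟨n - 1, by rw [Int.cast_sub, ← h, Int.cast_one, add_sub_cancel_right]⟩,
    fun ⟨n, h⟩ => ⟨n + 1, by rw [h, Int.cast_add, Int.cast_one]⟩⟩

theorem minimalModelWeight_succ_sub {K : Type*} [Field K] [CharZero K] {p p' : K}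
    (hp : p ≠ 0) (hp' : p' ≠ 0) (r s : K) :
    ((s * p - (r + 1) * p') ^ 2 - (p - p') ^ 2) / (4 * p * p')
        - ((s * p - r * p') ^ 2 - (p - p') ^ 2) / (4 * p * p')
      = ((2 * r + 1) * (p' / p) - 2 * s) / 4 := by
  field_simp
  ring

theorem conformal_weight_congruence_general (p p' : ℤ) (hp : 2 ≤ p) (hp' : 2 ≤ p')
    (l r s : ℤ) (k : ℂ) (hk : k + 2 = (p' : ℂ) / (p : ℂ))
    (lam : ℂ) :
    (∃ n : ℤ,
      ((((s : ℂ) * p - (r + 1) * p') ^ 2 - ((p : ℂ) - p') ^ 2) / (4 * p * p')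
          + (1 / 4) * (((l : ℂ) + 1) ^ 2 * k + 4 * ((l : ℂ) + 2) * (lam - k / 2)))
        - ((((s : ℂ) * p - r * p') ^ 2 - ((p : ℂ) - p') ^ 2) / (4 * p * p')
          + (1 / 4) * ((l : ℂ) ^ 2 * k + 4 * ((l : ℂ) + 1) * lam)) = (n : ℂ))
    ↔ (∃ n : ℤ, lam - (((s : ℂ) - 1) - (k + 2) * ((r : ℂ) - 1)) / 2 = (n : ℂ)) := by
  have hp0 : (p : ℂ) ≠ 0 := by exact_mod_cast (by omega : p ≠ 0)
  have hp'0 : (p' : ℂ) ≠ 0 := by exact_mod_cast (by omega : p' ≠ 0)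
  refine (exists_congr fun n => ?_).trans (exists_intCast_eq_add_one_iff _)
  rw [add_sub_add_comm, minimalModelWeight_succ_sub hp0 hp'0, ← hk]
  ring_nf

theorem conformal_weight_congruence (p p' : ℤ) (hp : 2 ≤ p) (hp' : 2 ≤ p')
    (hcop : IsCoprime p p') (l r s : ℤ) (hs1 : 1 ≤ s) (hs2 : s ≤ p' - 1)
    (hr1 : 1 ≤ r) (hr2 : r ≤ p - 2) (k : ℂ) (hk : k + 2 = (p' : ℂ) / (p : ℂ))
    (lam : ℂ) :
    (∃ n : ℤ,
      ((((s : ℂ) * p - (r + 1) * p') ^ 2 - ((p : ℂ) - p') ^ 2) / (4 * p * p')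
          + (1 / 4) * (((l : ℂ) + 1) ^ 2 * k + 4 * ((l : ℂ) + 2) * (lam - k / 2)))
        - ((((s : ℂ) * p - r * p') ^ 2 - ((p : ℂ) - p') ^ 2) / (4 * p * p')
          + (1 / 4) * ((l : ℂ) ^ 2 * k + 4 * ((l : ℂ) + 1) * lam)) = (n : ℂ))
    ↔ (∃ n : ℤ, lam - (((s : ℂ) - 1) - (k + 2) * ((r : ℂ) - 1)) / 2 = (n : ℂ)) :=
  conformal_weight_congruence_general p p' hp hp' l r s k hk lam
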